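/- Let A be a unital complex algebra of operators and let p, q, a_i, b_i, c_i, d_i (1 ≤ i ≤ n) be elements of A satisfying a_i b_j = δ_{ij} p and c_i d_j = δ_{ij} q. Let W₁, W₂ be n×n unitary matrices with all entries of modulus n^{-1/2}, and set ε¹_{ij} = n^{1/2}·conj(W₁(i,j)), ε²_{ij} = n^{1/2}·conj(W₂(i,j)). For x = [x_{ij}] ∈ M_n(A), define the diagonal matrices D₁ = diag(a₁,...,a_n), D₃ = diag(d₁,...,d_n), and D₂ = diag(D₂(1),...,D₂(n)) where D₂(k) = ∑_{i,j} ε¹_{ik} b_i x_{ij} c_j ε²_{kj}. Then the matrix product D₁ W₁ D₂ W₂ D₃ (with W₁, W₂ viewed as scalar matrices over A) equals the matrix [p·x_{ij}·q]. -/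

import Mathlib

/-!
Entry `(i, j)` of `D₁ W₁ D₂ W₂ D₃` is `∑ₖ W₁ i k W₂ k j · aᵢ D₂(k) dⱼ`. The relations
`aᵢ bₛ = δᵢₛ p` and `cₜ dⱼ = δₜⱼ q` collapse `aᵢ D₂(k) dⱼ` to `ε¹ᵢₖ ε²ₖⱼ · p xᵢⱼ q`, and since
every entry of `Wₗ` has modulus `n^(-1/2)`, each coefficient `W₁ i k ε¹ᵢₖ · W₂ k j ε²ₖⱼ`
equals `1/n`; summing over the `n` values of `k` gives `p xᵢⱼ q`.
-/

open Matrix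

section

variable {R A : Type*} [CommSemiring R] [Semiring A] [Algebra R A] {n : Type*} [Fintype n]
  [DecidableEq n]

theorem Matrix.diagonal_mul_map_mul_diagonal_mul_map_mul_diagonal_apply
    (a e d : n → A) (M N : Matrix n n R) (i j : n) :
    (diagonal a * M.map (algebraMap R A) * diagonal e * N.map (algebraMap R A) * diagonal d) i j =
      ∑ k, (M i k * N k j) • (a i * e k * d j) := by
  rw [mul_diagonal, mul_apply, Finset.sum_mul]
  refine Finset.sum_congr rfl fun k _ => ?_
  simp only [mul_diagonal, diagonal_mul, map_apply, Algebra.algebraMap_eq_smul_one, mul_smul_comm,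
    smul_mul_assoc, mul_one, smul_smul, mul_comm (N k j)]

theorem mul_sum_sum_smul_mul_mul_eq_of_mul_eq_ite {p q : A} {a b c d : n → A}
    (hab : ∀ i j, a i * b j = if i = j then p else 0)
    (hcd : ∀ i j, c i * d j = if i = j then q else 0)
    (f : n → n → R) (y : n → n → A) (i j : n) :
    a i * (∑ s, ∑ t, f s t • (b s * y s t * c t)) * d j = f i j • (p * y i j * q) := by
  have hsandwich : ∀ s t, a i * (b s * y s t * c t) * d j =
      (if i = s then p else 0) * y s t * (if t = j then q else 0) := fun s t => by
    rw [← hab, ← hcd]; noncomm_ring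
  simp only [Finset.mul_sum, Finset.sum_mul, mul_smul_comm, smul_mul_assoc, hsandwich, ite_mul,
    mul_ite, zero_mul, mul_zero, smul_ite, smul_zero, Finset.sum_ite_eq, Finset.sum_ite_eq',
    Finset.mem_univ, if_true]

end

theorem Complex.mul_sqrt_mul_conj_eq_inv_sqrt {r : ℝ} (hr : 0 < r) {w : ℂ}
    (hw : ‖w‖ = r ^ (-(1 / 2 : ℝ))) :
    w * ((Real.sqrt r : ℂ) * starRingEnd ℂ w) = ((Real.sqrt r)⁻¹ : ℝ) := by
  have hnorm : ‖w‖ = (Real.sqrt r)⁻¹ := by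
    rw [hw, Real.rpow_neg hr.le, Real.sqrt_eq_rpow, one_div]
  have hsqrt : Real.sqrt r ≠ 0 := (Real.sqrt_pos.mpr hr).ne'
  rw [mul_left_comm, Complex.mul_conj, ← Complex.sq_norm, hnorm]
  push_cast
  field_simp

theorem Fin.sum_univ_natCast_inv_smul {K V : Type*} [Field K] [CharZero K] [AddCommGroup V]
    [Module K V] {n : ℕ} (hn : n ≠ 0) (v : V) : ∑ _k : Fin n, (n : K)⁻¹ • v = v := by
  rw [Finset.sum_const, Finset.card_univ, Fintype.card_fin, ← Nat.cast_smul_eq_nsmul K, smul_smul,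
    mul_inv_cancel₀ (Nat.cast_ne_zero.mpr hn), one_smul]

theorem stmt2_general {A : Type*} [Ring A] [Algebra ℂ A] (n : ℕ)
    (p q : A) (a b c d : Fin n → A)
    (hab : ∀ i j, a i * b j = if i = j then p else 0)
    (hcd : ∀ i j, c i * d j = if i = j then q else 0)
    (W₁ W₂ : Matrix (Fin n) (Fin n) ℂ)
    (hmod₁ : ∀ i j, ‖W₁ i j‖ = (n : ℝ) ^ (-(1 / 2 : ℝ)))
    (hmod₂ : ∀ i j, ‖W₂ i j‖ = (n : ℝ) ^ (-(1 / 2 : ℝ)))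
    (x : Matrix (Fin n) (Fin n) A)
    (ε₁ ε₂ : Fin n → Fin n → ℂ)
    (hε₁ : ∀ i j, ε₁ i j = (Real.sqrt n : ℂ) * (starRingEnd ℂ) (W₁ i j))
    (hε₂ : ∀ i j, ε₂ i j = (Real.sqrt n : ℂ) * (starRingEnd ℂ) (W₂ i j))
    (D₁ D₂ D₃ : Matrix (Fin n) (Fin n) A)
    (hD₁ : D₁ = Matrix.diagonal a) (hD₃ : D₃ = Matrix.diagonal d)
    (hD₂ : D₂ = Matrix.diagonal fun k => ∑ i, ∑ j, (ε₁ i k * ε₂ k j) • (b i * x i j * c j)) :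
    D₁ * W₁.map (algebraMap ℂ A) * D₂ * W₂.map (algebraMap ℂ A) * D₃ =
      Matrix.of fun i j => p * x i j * q := by
  subst hD₁ hD₂ hD₃
  ext i j
  have hn : (0 : ℝ) < n := Nat.cast_pos.mpr i.pos
  have hcoeff : ∀ k, W₁ i k * W₂ k j * (ε₁ i k * ε₂ k j) = (n : ℂ)⁻¹ := fun k => by
    rw [mul_mul_mul_comm, hε₁, hε₂, Complex.mul_sqrt_mul_conj_eq_inv_sqrt hn (hmod₁ i k),
      Complex.mul_sqrt_mul_conj_eq_inv_sqrt hn (hmod₂ k j), ← Complex.ofReal_mul, ← mul_inv,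
      Real.mul_self_sqrt hn.le, Complex.ofReal_inv, Complex.ofReal_natCast]
  rw [diagonal_mul_map_mul_diagonal_mul_map_mul_diagonal_apply, of_apply,
    ← Fin.sum_univ_natCast_inv_smul (K := ℂ) i.pos.ne' (p * x i j * q)]
  refine Finset.sum_congr rfl fun k _ => ?_
  rw [mul_sum_sum_smul_mul_mul_eq_of_mul_eq_ite hab hcd (fun s t => ε₁ s k * ε₂ k t) x, smul_smul,
    hcoeff]

/-- Lemma 5, algebraic identity: in a unital complex algebra `A`, given
`p, q, aᵢ, bᵢ, cᵢ, dᵢ` with `aᵢ bⱼ = δᵢⱼ p`, `cᵢ dⱼ = δᵢⱼ q`, unitary matrices `W₁, W₂`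
with entries of modulus `n^(-1/2)`, `ε¹ᵢⱼ = √n · conj (W₁ i j)`, `ε²ᵢⱼ = √n · conj (W₂ i j)`,
and the diagonal matrices `D₁ = diag(aᵢ)`, `D₂(k) = ∑ᵢⱼ ε¹ᵢₖ bᵢ xᵢⱼ cⱼ ε²ₖⱼ`, `D₃ = diag(dᵢ)`,
we have `D₁ W₁ D₂ W₂ D₃ = [p xᵢⱼ q]`. -/
theorem stmt2 {A : Type*} [Ring A] [Algebra ℂ A] (n : ℕ)
    (p q : A) (a b c d : Fin n → A)
    (hab : ∀ i j, a i * b j = if i = j then p else 0)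
    (hcd : ∀ i j, c i * d j = if i = j then q else 0)
    (W₁ W₂ : Matrix (Fin n) (Fin n) ℂ)
    (hW₁ : W₁ ∈ Matrix.unitaryGroup (Fin n) ℂ) (hW₂ : W₂ ∈ Matrix.unitaryGroup (Fin n) ℂ)
    (hmod₁ : ∀ i j, ‖W₁ i j‖ = (n : ℝ) ^ (-(1 / 2 : ℝ)))
    (hmod₂ : ∀ i j, ‖W₂ i j‖ = (n : ℝ) ^ (-(1 / 2 : ℝ)))
    (x : Matrix (Fin n) (Fin n) A)
    (ε₁ ε₂ : Fin n → Fin n → ℂ)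
    (hε₁ : ∀ i j, ε₁ i j = (Real.sqrt n : ℂ) * (starRingEnd ℂ) (W₁ i j))
    (hε₂ : ∀ i j, ε₂ i j = (Real.sqrt n : ℂ) * (starRingEnd ℂ) (W₂ i j))
    (D₁ D₂ D₃ : Matrix (Fin n) (Fin n) A)
    (hD₁ : D₁ = Matrix.diagonal a) (hD₃ : D₃ = Matrix.diagonal d)
    (hD₂ : D₂ = Matrix.diagonal fun k => ∑ i, ∑ j, (ε₁ i k * ε₂ k j) • (b i * x i j * c j)) :
    D₁ * W₁.map (algebraMap ℂ A) * D₂ * W₂.map (algebraMap ℂ A) * D₃ =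
      Matrix.of fun i j => p * x i j * q :=
  stmt2_general n p q a b c d hab hcd W₁ W₂ hmod₁ hmod₂ x ε₁ ε₂ hε₁ hε₂ D₁ D₂ D₃ hD₁ hD₃ hD₂
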